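/- Let g be a Lie algebra, V a finite-dimensional g-module, and r ∈ Λ²g a skew-symmetric solution of the classical Yang–Baxter equation. Then δ(x) = [r, x ⊗ 1 + 1 ⊗ x] for x ∈ g ⋉ V defines a semidirect Lie bialgebra structure on the semidirect product g ⋉ V; in particular g is a Lie sub-bialgebra and δ(V) ⊆ V ∧ g. -/

import Mathlib

/- STATEMENT 3: Let g be a Lie algebra, V a finite-dimensional g-module, and
r ∈ Λ²g a skew-symmetric solution of the classical Yang–Baxter equation.
Then δ(x) = [r, x⊗1 + 1⊗x] defines a semidirect Lie bialgebra structure on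
the semidirect product g ⋉ V; in particular g is a Lie sub-bialgebra and
δ(V) ⊆ V ∧ g.  (The semidirect product is presented as a Lie algebra `L`
containing `g` as a Lie subalgebra and `V` as a complementary abelian ideal.) -/

open TensorProduct

variable (k : Type*) [Field k] [CharZero k]
variable (L : Type*) [LieRing L] [LieAlgebra k L]

attribute [local instance] LieRing.ofAssociativeRing

/-- The Lie bracket of `L` as a linear map `L →ₗ End L`. -/
noncomputable def lieBr : L →ₗ[k] Module.End k L := (LieAlgebra.ad k L).toLinearMap

/-- The Lie bracket as a linear map on the tensor square. -/
noncomputable def liftBr : L ⊗[k] L →ₗ[k] L := TensorProduct.lift (lieBr k L)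

/-- `(a⊗b)⊗(c⊗d) ↦ ⁅a,c⁆⊗b⊗d`, i.e. `φ⊗ψ ↦ [φ₁₂, ψ₁₃]` for `φ,ψ ∈ g⊗g ⊆ U(g)⊗U(g)`. -/
noncomputable def t1 : (L ⊗[k] L) ⊗[k] (L ⊗[k] L) →ₗ[k] L ⊗[k] (L ⊗[k] L) :=
  (TensorProduct.map (liftBr k L) LinearMap.id) ∘ₗ
    (TensorProduct.tensorTensorTensorComm k L L L L).toLinearMap

/-- `(a⊗b)⊗(c⊗d) ↦ a⊗⁅b,c⁆⊗d`, i.e. `φ⊗ψ ↦ [φ₁₂, ψ₂₃]`. -/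
noncomputable def t2 : (L ⊗[k] L) ⊗[k] (L ⊗[k] L) →ₗ[k] L ⊗[k] (L ⊗[k] L) :=
  (LinearMap.lTensor L ((LinearMap.rTensor L (liftBr k L)) ∘ₗ
      (TensorProduct.assoc k L L L).symm.toLinearMap)) ∘ₗ
    (TensorProduct.assoc k L L (L ⊗[k] L)).toLinearMap

/-- `(a⊗b)⊗(c⊗d) ↦ a⊗c⊗⁅b,d⁆`, i.e. `φ⊗ψ ↦ [φ₁₃, ψ₂₃]`. -/
noncomputable def t3 : (L ⊗[k] L) ⊗[k] (L ⊗[k] L) →ₗ[k] L ⊗[k] (L ⊗[k] L) :=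
  (LinearMap.lTensor L (LinearMap.lTensor L (liftBr k L))) ∘ₗ
    (TensorProduct.assoc k L L (L ⊗[k] L)).toLinearMap ∘ₗ
    (TensorProduct.tensorTensorTensorComm k L L L L).toLinearMap

/-- The classical Yang–Baxter equation `[r₁₂,r₁₃]+[r₁₂,r₂₃]+[r₁₃,r₂₃] = 0`
(all terms lie in `g⊗g⊗g ⊆ U(g)^{⊗3}`). -/
def IsCYBE (r : L ⊗[k] L) : Prop :=
  t1 k L (r ⊗ₜ r) + t2 k L (r ⊗ₜ r) + t3 k L (r ⊗ₜ r) = 0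

/-- `x ↦ (ad x ⊗ 1 + 1 ⊗ ad x)`, the adjoint action on the tensor square;
`adT x t = [x⊗1 + 1⊗x, t]` in `U(g)⊗U(g)`. -/
noncomputable def adT : L →ₗ[k] (L ⊗[k] L →ₗ[k] L ⊗[k] L) :=
  ((LinearMap.rTensorHom L).comp (lieBr k L)) + ((LinearMap.lTensorHom L).comp (lieBr k L))

/-- `t ∈ g⊗g` is `g`-invariant: `[x⊗1 + 1⊗x, t] = 0` for all `x`. -/
def LieInvariantElem (t : L ⊗[k] L) : Prop := ∀ x : L, adT k L x t = 0

/-- The flip `r^op` of `r`. -/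
noncomputable def rop (r : L ⊗[k] L) : L ⊗[k] L := (TensorProduct.comm k L L) r

/-- The coboundary cobracket `δ(x) = [r, x⊗1 + 1⊗x] = -(ad x ⊗ 1 + 1 ⊗ ad x)(r)`. -/
noncomputable def cob (r : L ⊗[k] L) : L →ₗ[k] L ⊗[k] L :=
  -((LinearMap.applyₗ r) ∘ₗ (adT k L))

/-- The cyclic permutation `a⊗(b⊗c) ↦ b⊗(c⊗a)` on the triple tensor product. -/
noncomputable def cyc : L ⊗[k] (L ⊗[k] L) →ₗ[k] L ⊗[k] (L ⊗[k] L) :=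
  (TensorProduct.assoc k L L L).toLinearMap ∘ₗ (TensorProduct.comm k L (L ⊗[k] L)).toLinearMap

/-- `δ` is co-skew-symmetric, i.e. takes values in `Λ²g ⊆ g⊗g`. -/
def IsCoSkew (D : L →ₗ[k] L ⊗[k] L) : Prop :=
  ∀ x : L, (TensorProduct.comm k L L) (D x) = - D x

/-- The 1-cocycle condition
`δ([x,y]) = [δ(x), y⊗1+1⊗y] + [x⊗1+1⊗x, δ(y)]`. -/
def IsCocycle (D : L →ₗ[k] L ⊗[k] L) : Prop :=
  ∀ x y : L, D ⁅x, y⁆ = adT k L x (D y) - adT k L y (D x)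

/-- The co-Jacobi identity: the cyclic sum of `(1⊗δ)∘δ` vanishes;
equivalently `δ*` is a Lie bracket on `g*`. -/
def IsCoJacobi (D : L →ₗ[k] L ⊗[k] L) : Prop :=
  ∀ x : L,
    (LinearMap.lTensor L D) (D x) + cyc k L ((LinearMap.lTensor L D) (D x)) +
      cyc k L (cyc k L ((LinearMap.lTensor L D) (D x))) = 0

/-- `D` is a Lie bialgebra cobracket on `L`. -/
def IsLieCobracket (D : L →ₗ[k] L ⊗[k] L) : Prop :=
  IsCoSkew k L D ∧ IsCocycle k L D ∧ IsCoJacobi k L D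

/-- For submodules `p q ⊆ L`, the image of `p ⊗ q` in `L ⊗ L`. -/
noncomputable def TP (p q : Submodule k L) : Submodule k (L ⊗[k] L) :=
  LinearMap.range (TensorProduct.map p.subtype q.subtype)

/-! The cobracket is the coboundary `δ(x) = -ad_x r`, so the cocycle condition holds for every
`r`, and co-skewness is `r^op = -r`. For co-Jacobi, `(1 ⊗ δ) δ(x) = A(ad_x r, r)` with the bilinear
map `A((u ⊗ v) ⊗ t) = u ⊗ ad_v t`. For skew-symmetric `s, t` the cyclic sum of `A(s, t)` is
`Y(s, t) + Y(t, s)`, where `Y(r, r) = [r₁₂,r₁₃]+[r₁₂,r₂₃]+[r₁₃,r₂₃]`; this uses only the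
antisymmetry of the bracket. Since `Y` is `L`-equivariant by the Jacobi identity, and `ad_x r` is
again skew-symmetric, the cyclic sum of `(1 ⊗ δ) δ(x)` is `ad_x (Y(r, r)) = 0`. -/

section CoboundaryBialgebra

variable {k L}

omit [CharZero k]

@[simp] lemma liftBr_tmul (u v : L) : liftBr k L (u ⊗ₜ[k] v) = ⁅u, v⁆ := by
  simp [liftBr, lieBr]

@[simp] lemma adT_tmul (x u v : L) :
    adT k L x (u ⊗ₜ[k] v) = ⁅x, u⁆ ⊗ₜ[k] v + u ⊗ₜ[k] ⁅x, v⁆ := by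
  simp [adT, lieBr]

@[simp] lemma cyc_tmul (u v w : L) :
    cyc k L (u ⊗ₜ[k] (v ⊗ₜ[k] w)) = v ⊗ₜ[k] (w ⊗ₜ[k] u) := by
  simp [cyc]

@[simp] lemma t1_tmul (a b c d : L) :
    t1 k L ((a ⊗ₜ[k] b) ⊗ₜ[k] (c ⊗ₜ[k] d)) = ⁅a, c⁆ ⊗ₜ[k] (b ⊗ₜ[k] d) := by
  simp [t1]

@[simp] lemma t2_tmul (a b c d : L) :
    t2 k L ((a ⊗ₜ[k] b) ⊗ₜ[k] (c ⊗ₜ[k] d)) = a ⊗ₜ[k] (⁅b, c⁆ ⊗ₜ[k] d) := by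
  simp [t2]

@[simp] lemma t3_tmul (a b c d : L) :
    t3 k L ((a ⊗ₜ[k] b) ⊗ₜ[k] (c ⊗ₜ[k] d)) = a ⊗ₜ[k] (c ⊗ₜ[k] ⁅b, d⁆) := by
  simp [t3]

lemma cob_apply (r : L ⊗[k] L) (x : L) : cob k L r x = -adT k L x r := by
  simp [cob]

lemma comm_adT (x : L) (t : L ⊗[k] L) :
    TensorProduct.comm k L L (adT k L x t) = adT k L x (TensorProduct.comm k L L t) := by
  induction t using TensorProduct.induction_on with
  | zero => simp
  | tmul u v => simp [add_comm]
  | add s t hs ht => simp only [map_add, hs, ht]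

lemma adT_lie (x y : L) (t : L ⊗[k] L) :
    adT k L ⁅x, y⁆ t = adT k L x (adT k L y t) - adT k L y (adT k L x t) := by
  induction t using TensorProduct.induction_on with
  | zero => simp
  | tmul u v =>
    simp only [adT_tmul, lie_lie, map_add, TensorProduct.sub_tmul, TensorProduct.tmul_sub]
    abel
  | add s t hs ht => simp only [map_add, hs, ht]; abel

lemma adT_mem_TP_sup {p q p' q' : Submodule k L} {x : L}
    (hp : ∀ u ∈ p, ⁅x, u⁆ ∈ p') (hq : ∀ u ∈ q, ⁅x, u⁆ ∈ q') {t : L ⊗[k] L}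
    (ht : t ∈ TP k L p q) : adT k L x t ∈ TP k L p' q ⊔ TP k L p q' := by
  obtain ⟨s, rfl⟩ := ht
  induction s using TensorProduct.induction_on with
  | zero => simp
  | tmul u v =>
    rw [TensorProduct.map_tmul, adT_tmul]
    exact add_mem (Submodule.mem_sup_left ⟨(⟨⁅x, ↑u⁆, hp u u.2⟩ : p') ⊗ₜ[k] v, rfl⟩)
      (Submodule.mem_sup_right ⟨u ⊗ₜ[k] (⟨⁅x, ↑v⁆, hq v v.2⟩ : q'), rfl⟩)
  | add s t hs ht => rw [map_add, map_add]; exact add_mem hs ht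

lemma isCoSkew_cob {r : L ⊗[k] L} (hskew : rop k L r = -r) : IsCoSkew k L (cob k L r) := by
  intro x
  rw [cob_apply, map_neg, comm_adT, ← rop, hskew, map_neg]

lemma isCocycle_cob (r : L ⊗[k] L) : IsCocycle k L (cob k L r) := by
  intro x y
  simp only [cob_apply, map_neg, adT_lie]
  abel

noncomputable def ybMap : (L ⊗[k] L) ⊗[k] (L ⊗[k] L) →ₗ[k] L ⊗[k] (L ⊗[k] L) :=
  t1 k L + t2 k L + t3 k L

noncomputable def actSnd : (L ⊗[k] L) ⊗[k] (L ⊗[k] L) →ₗ[k] L ⊗[k] (L ⊗[k] L) :=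
  LinearMap.lTensor L (TensorProduct.lift (adT k L)) ∘ₗ
    (TensorProduct.assoc k L L (L ⊗[k] L)).toLinearMap

noncomputable def adTriple (x : L) : L ⊗[k] (L ⊗[k] L) →ₗ[k] L ⊗[k] (L ⊗[k] L) :=
  LinearMap.rTensor (L ⊗[k] L) (lieBr k L x) + LinearMap.lTensor L (adT k L x)

noncomputable def cyclicSum : L ⊗[k] (L ⊗[k] L) →ₗ[k] L ⊗[k] (L ⊗[k] L) :=
  LinearMap.id + cyc k L + cyc k L ∘ₗ cyc k L

@[simp] lemma ybMap_tmul (a b c d : L) :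
    ybMap ((a ⊗ₜ[k] b) ⊗ₜ[k] (c ⊗ₜ[k] d)) = ⁅a, c⁆ ⊗ₜ[k] (b ⊗ₜ[k] d) +
      a ⊗ₜ[k] (⁅b, c⁆ ⊗ₜ[k] d) + a ⊗ₜ[k] (c ⊗ₜ[k] ⁅b, d⁆) := by
  simp [ybMap]

@[simp] lemma actSnd_tmul (u v : L) (t : L ⊗[k] L) :
    actSnd ((u ⊗ₜ[k] v) ⊗ₜ[k] t) = u ⊗ₜ[k] adT k L v t := by
  simp [actSnd]

@[simp] lemma adTriple_tmul (x u v w : L) :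
    adTriple x (u ⊗ₜ[k] (v ⊗ₜ[k] w)) =
      ⁅x, u⁆ ⊗ₜ[k] (v ⊗ₜ[k] w) + u ⊗ₜ[k] (⁅x, v⁆ ⊗ₜ[k] w + v ⊗ₜ[k] ⁅x, w⁆) := by
  simp [adTriple, lieBr]

lemma cyclicSum_apply (t : L ⊗[k] (L ⊗[k] L)) :
    cyclicSum t = t + cyc k L t + cyc k L (cyc k L t) := rfl

lemma adTriple_ybMap (x : L) (s t : L ⊗[k] L) :
    adTriple x (ybMap (s ⊗ₜ[k] t)) =
      ybMap (adT k L x s ⊗ₜ[k] t) + ybMap (s ⊗ₜ[k] adT k L x t) := by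
  have h : adTriple x ∘ₗ ybMap =
      ybMap ∘ₗ (LinearMap.rTensor _ (adT k L x) + LinearMap.lTensor _ (adT k L x)) := by
    refine TensorProduct.ext_fourfold' fun a b c d => ?_
    simp only [LinearMap.comp_apply, LinearMap.add_apply, LinearMap.rTensor_tmul,
      LinearMap.lTensor_tmul, adT_tmul, ybMap_tmul, adTriple_tmul, map_add,
      TensorProduct.add_tmul, TensorProduct.tmul_add, leibniz_lie x]
    abel
  simpa using LinearMap.congr_fun h (s ⊗ₜ t)

noncomputable def antisymmetrize : L ⊗[k] L →ₗ[k] L ⊗[k] L :=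
  LinearMap.id - (TensorProduct.comm k L L).toLinearMap

lemma cyclicSum_actSnd_comp_map_antisymmetrize :
    cyclicSum ∘ₗ actSnd ∘ₗ TensorProduct.map antisymmetrize antisymmetrize =
      ybMap ∘ₗ (LinearMap.id + (TensorProduct.comm k (L ⊗[k] L) (L ⊗[k] L)).toLinearMap) ∘ₗ
        TensorProduct.map antisymmetrize antisymmetrize := by
  refine TensorProduct.ext_fourfold' fun a b c d => ?_
  have hca : ⁅c, a⁆ = -⁅a, c⁆ := (lie_skew c a).symm
  have hcb : ⁅c, b⁆ = -⁅b, c⁆ := (lie_skew c b).symm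
  have hda : ⁅d, a⁆ = -⁅a, d⁆ := (lie_skew d a).symm
  have hdb : ⁅d, b⁆ = -⁅b, d⁆ := (lie_skew d b).symm
  simp only [antisymmetrize, LinearMap.comp_apply, LinearMap.add_apply, LinearMap.sub_apply,
    LinearMap.id_apply, TensorProduct.map_tmul, LinearEquiv.coe_coe, TensorProduct.comm_tmul,
    TensorProduct.sub_tmul, TensorProduct.tmul_sub, map_sub, map_add, actSnd_tmul, adT_tmul,
    ybMap_tmul, cyclicSum_apply, cyc_tmul, TensorProduct.tmul_add,
    hca, hcb, hda, hdb, TensorProduct.neg_tmul, TensorProduct.tmul_neg]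
  abel

lemma antisymmetrize_of_rop_eq_neg {t : L ⊗[k] L} (ht : rop k L t = -t) :
    antisymmetrize t = (2 : k) • t := by
  rw [antisymmetrize, LinearMap.sub_apply, LinearEquiv.coe_coe, ← rop, ht, sub_neg_eq_add,
    LinearMap.id_apply, two_smul]

-- Up to the factor 2, skew-symmetric tensors are the values of `antisymmetrize`.
lemma cyclicSum_actSnd_of_rop_eq_neg [CharZero k] {s t : L ⊗[k] L} (hs : rop k L s = -s)
    (ht : rop k L t = -t) :
    cyclicSum (actSnd (s ⊗ₜ[k] t)) = ybMap (s ⊗ₜ[k] t) + ybMap (t ⊗ₜ[k] s) := by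
  have h := LinearMap.congr_fun cyclicSum_actSnd_comp_map_antisymmetrize (s ⊗ₜ t)
  simp only [LinearMap.comp_apply, TensorProduct.map_tmul, antisymmetrize_of_rop_eq_neg hs,
    antisymmetrize_of_rop_eq_neg ht, LinearMap.add_apply, LinearMap.id_apply,
    LinearEquiv.coe_coe, TensorProduct.comm_tmul, TensorProduct.smul_tmul_smul, map_smul,
    map_add] at h
  exact smul_right_injective _ (mul_ne_zero two_ne_zero two_ne_zero) h

lemma lTensor_cob_cob (r : L ⊗[k] L) (x : L) :
    LinearMap.lTensor L (cob k L r) (cob k L r x) = actSnd (adT k L x r ⊗ₜ[k] r) := by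
  have hlTensor (t : L ⊗[k] L) : LinearMap.lTensor L (cob k L r) t = -actSnd (t ⊗ₜ[k] r) := by
    induction t using TensorProduct.induction_on with
    | zero => simp
    | tmul u v => simp [cob_apply, TensorProduct.tmul_neg]
    | add s t hs ht => rw [map_add, hs, ht, TensorProduct.add_tmul, map_add, neg_add]
  rw [hlTensor, cob_apply, TensorProduct.neg_tmul, map_neg, neg_neg]

lemma isCoJacobi_cob [CharZero k] {r : L ⊗[k] L} (hskew : rop k L r = -r)
    (hCYBE : IsCYBE k L r) : IsCoJacobi k L (cob k L r) := by
  intro x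
  have hskew_adT : rop k L (adT k L x r) = -adT k L x r := by
    rw [rop, comm_adT, ← rop, hskew, map_neg]
  have hYB : ybMap (r ⊗ₜ[k] r) = 0 := hCYBE
  rw [lTensor_cob_cob, ← cyclicSum_apply, cyclicSum_actSnd_of_rop_eq_neg hskew_adT hskew,
    ← adTriple_ybMap, hYB, map_zero]

lemma isLieCobracket_cob [CharZero k] {r : L ⊗[k] L} (hskew : rop k L r = -r)
    (hCYBE : IsCYBE k L r) : IsLieCobracket k L (cob k L r) :=
  ⟨isCoSkew_cob hskew, isCocycle_cob r, isCoJacobi_cob hskew hCYBE⟩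

lemma cob_mem_TP_of_mem {G : LieSubalgebra k L} {r : L ⊗[k] L}
    (hr : r ∈ TP k L G.toSubmodule G.toSubmodule) {x : L} (hx : x ∈ G) :
    cob k L r x ∈ TP k L G.toSubmodule G.toSubmodule := by
  have hG (u : L) (hu : u ∈ G.toSubmodule) : ⁅x, u⁆ ∈ G.toSubmodule := G.lie_mem hx hu
  rw [cob_apply, ← sup_idem (TP k L G.toSubmodule G.toSubmodule)]
  exact neg_mem (adT_mem_TP_sup hG hG hr)

lemma cob_mem_TP_sup_of_mem {p V : Submodule k L} (hV : ∀ u ∈ p, ∀ v ∈ V, ⁅u, v⁆ ∈ V)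
    {r : L ⊗[k] L} (hr : r ∈ TP k L p p) {v : L} (hv : v ∈ V) :
    cob k L r v ∈ TP k L V p ⊔ TP k L p V := by
  have hp (u : L) (hu : u ∈ p) : ⁅v, u⁆ ∈ V := by
    rw [← lie_skew]
    exact neg_mem (hV u hu v hv)
  rw [cob_apply]
  exact neg_mem (adT_mem_TP_sup hp hp hr)

end CoboundaryBialgebra

theorem stmt3 (G : LieSubalgebra k L) (V : Submodule k L)
    (hideal : ∀ x : L, ∀ v ∈ V, ⁅x, v⁆ ∈ V)
    (r : L ⊗[k] L)
    (hrG : r ∈ TP k L G.toSubmodule G.toSubmodule)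
    (hskew : rop k L r = -r)
    (hCYBE : IsCYBE k L r) :
    IsLieCobracket k L (cob k L r) ∧
      (∀ x ∈ G.toSubmodule, cob k L r x ∈ TP k L G.toSubmodule G.toSubmodule) ∧
      (∀ v ∈ V, cob k L r v ∈
        TP k L V G.toSubmodule ⊔ TP k L G.toSubmodule V) :=
  ⟨isLieCobracket_cob hskew hCYBE, fun _ hx => cob_mem_TP_of_mem hrG hx,
    fun _ hv => cob_mem_TP_sup_of_mem (fun u _ => hideal u) hrG hv⟩
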